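/- Theorem 7 (upper bound of recovery error for HGLISTA with gain gates). Assume μ := μ(A) > 0, let S ⊆ {1, …, N} with 2 ≤ |S|, 2|S| ≤ N and |S| < (2 + 1/μ)/4, let B_x > 0, x* ∈ X(B_x, S), and b = A x*. Consider sequences x, v, u, w : ℕ → ℝ^N and gate vectors gⁿ ∈ ℝ^N for n ≥ 1, with g⁰ := (1, …, 1) (no gate at the first iteration) and x⁰ = 0, such that for every n ≥ 0: W̄ⁿ, Ŵⁿ ∈ W_s(A); θ₁ⁿ = μ‖gⁿ ⊙ xⁿ − x*‖₁ and vⁿ = S_{θ₁ⁿ}(gⁿ ⊙ xⁿ + (W̄ⁿ)ᵀ(b − A(gⁿ ⊙ xⁿ))); uⁿ ∈ ℝ^N arbitrary; θ₂ⁿ = μ‖gⁿ ⊙ uⁿ − x*‖₁ + μ((N − |S|)/(|S| − 1))·‖gⁿ ⊙ uⁿ‖₁ and wⁿ = S_{θ₂ⁿ}(gⁿ ⊙ uⁿ + (Ŵⁿ)ᵀ(b − A(gⁿ ⊙ uⁿ))); xⁿ⁺¹ = αⁿvⁿ + (1 − αⁿ)wⁿ with θ₂ⁿ/(θ₁ⁿ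 + θ₂ⁿ) ≤ αⁿ < 1 if θ₁ⁿ ≠ 0 and αⁿ = 1 if θ₁ⁿ = 0. Assume further that for each n ≥ 0 the next gate gⁿ⁺¹ = 1 + κⁿ⁺¹ satisfies: writing Ξᵢⁿ = max(|vᵢⁿ|, |wᵢⁿ|), Υᵢⁿ = min(|vᵢⁿ|, |wᵢⁿ|), θ_maxⁿ = max(θ₁ⁿ, θ₂ⁿ), θ_minⁿ = min(θ₁ⁿ, θ₂ⁿ), and Qⁿ = (S ∩ supp(vⁿ)) ∪ (S ∩ supp(wⁿ)), there is ϱⁿ with sup_{i∈Qⁿ} (θ_maxⁿΞᵢⁿ − θ_minⁿΥᵢⁿ)/(θ_maxⁿΞᵢⁿ + θ_minⁿΥᵢⁿ) ≤ ϱⁿ ≤ 1 such that for every i ∈ Qⁿ: (1 − ϱⁿ)θ_maxⁿ/Υᵢⁿ ≤ κᵢⁿ⁺¹ ≤ (1 + ϱⁿ)θ_minⁿ/Ξᵢⁿ (the lower bound read as 0 when Υᵢⁿ = 0). Then supp(xⁿ) ⊆ S for every n ∈ ℕ, and for every n ≥ 2: ‖xⁿ − x*‖₂ ≤ |S|·B_x·exp(−Σ_{k=0}^{n−2}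 c_g^k − c), where c_g^k = −log(4μ|S| − 2μ − 2(1 − ϱ^k)·μ·s_*^k) > 0 with s_*^k = min(|supp(v^k)|, |supp(w^k)|), and c = −log(4μ|S| − 2μ) > 0. -/
import Mathlib


open scoped Classical

/-- The Euclidean (ℓ²) norm on `Fin n → ℝ`. -/
noncomputable def l2norm {n : ℕ} (x : Fin n → ℝ) : ℝ := Real.sqrt (∑ i, (x i) ^ 2)

/-- The ℓ¹ norm on `Fin n → ℝ`. -/
noncomputable def l1norm {n : ℕ} (x : Fin n → ℝ) : ℝ := ∑ i, |x i|

/-- Componentwise soft-thresholding: `S_θ(z)ᵢ = sgn(zᵢ) * max (|zᵢ| - θ) 0`. -/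
noncomputable def soft {n : ℕ} (θ : ℝ) (z : Fin n → ℝ) : Fin n → ℝ :=
  fun i => Real.sign (z i) * max (|z i| - θ) 0

/-- `max_{i ≠ j} |WᵢᵀAⱼ|`, where `Wᵢ`, `Aⱼ` are columns. -/
noncomputable def mutualMax {m n : ℕ} (A W : Matrix (Fin m) (Fin n) ℝ) : ℝ :=
  sSup {c : ℝ | ∃ i j : Fin n, i ≠ j ∧ c = |∑ k, W k i * A k j|}

/-- Generalized mutual coherence `μ(A)`: the infimum of `max_{i≠j} |WᵢᵀAⱼ|` over all
matrices `W` with `WᵢᵀAᵢ = 1` for all `i`. -/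
noncomputable def gmc {m n : ℕ} (A : Matrix (Fin m) (Fin n) ℝ) : ℝ :=
  sInf {c : ℝ | ∃ W : Matrix (Fin m) (Fin n) ℝ,
    (∀ i, (∑ k, W k i * A k i) = 1) ∧ c = mutualMax A W}

/-- `W ∈ W_s(A)`: `WᵢᵀAᵢ = 1` for all `i`, and `W` attains the infimum defining `μ(A)`. -/
def memWs {m n : ℕ} (A W : Matrix (Fin m) (Fin n) ℝ) : Prop :=
  (∀ i, (∑ k, W k i * A k i) = 1) ∧ mutualMax A W = gmc A

/- ------------------- auxiliary lemmas ------------------- -/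

lemma l1norm_nonneg {n : ℕ} (x : Fin n → ℝ) : 0 ≤ l1norm x :=
  Finset.sum_nonneg fun _ _ => abs_nonneg _

lemma l1norm_comp_zero {n : ℕ} {x : Fin n → ℝ} (h : l1norm x = 0) (i : Fin n) : x i = 0 := by
  have := (Finset.sum_eq_zero_iff_of_nonneg (fun j _ => abs_nonneg (x j))).mp h i (Finset.mem_univ i)
  exact abs_eq_zero.mp this

lemma l2norm_le_l1norm {n : ℕ} (x : Fin n → ℝ) : l2norm x ≤ l1norm x := by
  have h : ∑ i, (x i) ^ 2 ≤ (l1norm x) ^ 2 := by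
    have h1 : ∀ i ∈ Finset.univ, (x i) ^ 2 ≤ |x i| * l1norm x := by
      intro i _
      have h2 : |x i| ≤ l1norm x :=
        Finset.single_le_sum (f := fun j => |x j|) (fun j _ => abs_nonneg _) (Finset.mem_univ i)
      calc (x i) ^ 2 = |x i| * |x i| := by rw [← sq_abs, sq]
        _ ≤ |x i| * l1norm x := mul_le_mul_of_nonneg_left h2 (abs_nonneg _)
    calc ∑ i, (x i) ^ 2 ≤ ∑ i, |x i| * l1norm x := Finset.sum_le_sum h1
      _ = (l1norm x) ^ 2 := by rw [← Finset.sum_mul]; rw [l1norm]; ring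
  calc l2norm x = Real.sqrt (∑ i, (x i) ^ 2) := rfl
    _ ≤ Real.sqrt ((l1norm x) ^ 2) := Real.sqrt_le_sqrt h
    _ = |l1norm x| := Real.sqrt_sq_eq_abs _
    _ = l1norm x := abs_of_nonneg (l1norm_nonneg x)

lemma abs_sign_of_ne {x : ℝ} (h : x ≠ 0) : |Real.sign x| = 1 := by
  rcases lt_or_gt_of_ne h with h'|h'
  · rw [Real.sign_of_neg h', abs_neg, abs_one]
  · rw [Real.sign_of_pos h', abs_one]

lemma sign_mul_abs' (x : ℝ) : Real.sign x * |x| = x := by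
  rcases lt_trichotomy x 0 with h|h|h
  · rw [Real.sign_of_neg h, abs_of_neg h]; ring
  · rw [h, Real.sign_zero, abs_zero, mul_zero]
  · rw [Real.sign_of_pos h, abs_of_pos h, one_mul]

lemma soft_coord (θ t' y : ℝ) (hθ : 0 ≤ θ) (hr : |y - t'| ≤ θ) :
    ∃ cs : ℝ, 0 ≤ cs ∧ Real.sign y * max (|y| - θ) 0 = Real.sign t' * cs ∧ cs ≤ |t'| ∧
      |t'| - cs ≤ θ + |y - t'| ∧ (cs ≠ 0 → θ - |y - t'| ≤ |t'| - cs) := by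
  have htri1 : |t'| - |y| ≤ |y - t'| := by
    have := abs_sub_abs_le_abs_sub t' y
    rwa [abs_sub_comm] at this
  have htri2 : |y| - |t'| ≤ |y - t'| := abs_sub_abs_le_abs_sub y t'
  rcases le_or_gt |y| θ with h|h
  · refine ⟨0, le_refl 0, ?_, abs_nonneg t', by linarith, fun hc => absurd rfl hc⟩
    rw [max_eq_right (by linarith), mul_zero, mul_zero]
  · have hY : max (|y| - θ) 0 = |y| - θ := max_eq_left (by linarith)
    have hy0 : y ≠ 0 := by intro h0; rw [h0, abs_zero] at h; linarith
    have hsign : Real.sign y = Real.sign t' := by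
      rcases lt_or_gt_of_ne hy0 with hneg|hpos
      · have hyabs : |y| = -y := abs_of_neg hneg
        have h2 : -(y - t') ≤ |y - t'| := neg_le_abs _
        have ht'neg : t' < 0 := by linarith
        rw [Real.sign_of_neg hneg, Real.sign_of_neg ht'neg]
      · have hyabs : |y| = y := abs_of_pos hpos
        have h2 : y - t' ≤ |y - t'| := le_abs_self _
        have ht'pos : 0 < t' := by linarith
        rw [Real.sign_of_pos hpos, Real.sign_of_pos ht'pos]
    refine ⟨|y| - θ, by linarith, ?_, by linarith, by linarith, fun _ => by linarith⟩
    rw [hY, hsign]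

lemma le_mutualMax {m n : ℕ} (A W : Matrix (Fin m) (Fin n) ℝ) {i j : Fin n} (hij : i ≠ j) :
    |∑ k, W k i * A k j| ≤ mutualMax A W := by
  have hset : {c : ℝ | ∃ i j : Fin n, i ≠ j ∧ c = |∑ k, W k i * A k j|} =
      (fun p : Fin n × Fin n => |∑ k, W k p.1 * A k p.2|) '' {p | p.1 ≠ p.2} := by
    ext cc
    constructor
    · rintro ⟨i, j, hij, rfl⟩; exact ⟨(i, j), hij, rfl⟩
    · rintro ⟨⟨i, j⟩, hij, rfl⟩; exact ⟨i, j, hij, rfl⟩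
  have hbdd : BddAbove {c : ℝ | ∃ i j : Fin n, i ≠ j ∧ c = |∑ k, W k i * A k j|} := by
    rw [hset]
    exact ((Set.toFinite _).image _).bddAbove
  exact le_csSup hbdd ⟨i, j, hij, rfl⟩

lemma residual_bound {M N : ℕ} (A W : Matrix (Fin M) (Fin N) ℝ) (hW : memWs A W)
    (xstar z : Fin N → ℝ) (i : Fin N) :
    |(z + W.transpose.mulVec (A.mulVec xstar - A.mulVec z)) i - xstar i| ≤
      gmc A * ∑ j ∈ Finset.univ.erase i, |z j - xstar j| := by
  have key : (z + W.transpose.mulVec (A.mulVec xstar - A.mulVec z)) i - xstar i =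
      ∑ j ∈ Finset.univ.erase i, (∑ k, W k i * A k j) * (xstar j - z j) := by
    have h1 : (z + W.transpose.mulVec (A.mulVec xstar - A.mulVec z)) i
        = z i + ∑ k, W k i * (∑ j, A k j * (xstar j - z j)) := by
      simp only [Pi.add_apply, Matrix.mulVec, dotProduct, Matrix.transpose_apply,
        Pi.sub_apply, mul_sub, Finset.sum_sub_distrib]
    have h2 : ∑ k, W k i * (∑ j, A k j * (xstar j - z j))
        = ∑ j, (∑ k, W k i * A k j) * (xstar j - z j) := by
      simp_rw [Finset.mul_sum, Finset.sum_mul]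
      rw [Finset.sum_comm]
      congr 1; ext k; congr 1; ext j; ring
    have h3 : ∑ j, (∑ k, W k i * A k j) * (xstar j - z j)
        = (∑ k, W k i * A k i) * (xstar i - z i)
          + ∑ j ∈ Finset.univ.erase i, (∑ k, W k i * A k j) * (xstar j - z j) :=
      (Finset.add_sum_erase _ _ (Finset.mem_univ i)).symm
    rw [h1, h2, h3, hW.1 i]
    ring
  rw [key]
  calc |∑ j ∈ Finset.univ.erase i, (∑ k, W k i * A k j) * (xstar j - z j)|
      ≤ ∑ j ∈ Finset.univ.erase i, |(∑ k, W k i * A k j) * (xstar j - z j)| :=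
        Finset.abs_sum_le_sum_abs _ _
    _ ≤ ∑ j ∈ Finset.univ.erase i, gmc A * |z j - xstar j| := by
        apply Finset.sum_le_sum
        intro j hj
        rw [abs_mul]
        have hij : i ≠ j := fun h => (Finset.mem_erase.mp hj).1 h.symm
        have h4 : |∑ k, W k i * A k j| ≤ gmc A := by
          rw [← hW.2]; exact le_mutualMax A W hij
        rw [abs_sub_comm]
        exact mul_le_mul_of_nonneg_right h4 (abs_nonneg _)
    _ = gmc A * ∑ j ∈ Finset.univ.erase i, |z j - xstar j| := (Finset.mul_sum _ _ _).symm

lemma soft_step {M N : ℕ} (A W : Matrix (Fin M) (Fin N) ℝ) (hW : memWs A W)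
    (hμ0 : 0 ≤ gmc A) (xstar : Fin N → ℝ) (θ : ℝ) (z : Fin N → ℝ)
    (hcond : gmc A * l1norm (z - xstar) ≤ θ) (i : Fin N) :
    ∃ cs D : ℝ, 0 ≤ cs ∧ 0 ≤ D ∧ D ≤ gmc A * (l1norm (z - xstar) - |z i - xstar i|) ∧
      soft θ (z + W.transpose.mulVec (A.mulVec xstar - A.mulVec z)) i
        = Real.sign (xstar i) * cs ∧
      cs ≤ |xstar i| ∧ |xstar i| - cs ≤ θ + D ∧ (cs ≠ 0 → θ - D ≤ |xstar i| - cs) := by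
  have hDsum : ∑ j ∈ Finset.univ.erase i, |z j - xstar j|
      = l1norm (z - xstar) - |z i - xstar i| := by
    rw [Finset.sum_erase_eq_sub (Finset.mem_univ i)]
    simp only [l1norm, Pi.sub_apply]
  have hD := residual_bound A W hW xstar z i
  rw [hDsum] at hD
  have hDθ : |(z + W.transpose.mulVec (A.mulVec xstar - A.mulVec z)) i - xstar i| ≤ θ := by
    have h1 : gmc A * (l1norm (z - xstar) - |z i - xstar i|) ≤ gmc A * l1norm (z - xstar) :=
      mul_le_mul_of_nonneg_left (by linarith [abs_nonneg (z i - xstar i)]) hμ0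
    linarith
  have hθnn : 0 ≤ θ := le_trans (mul_nonneg hμ0 (l1norm_nonneg _)) hcond
  obtain ⟨cs, h0, heq, h2, h3, h4⟩ :=
    soft_coord θ (xstar i) ((z + W.transpose.mulVec (A.mulVec xstar - A.mulVec z)) i) hθnn hDθ
  exact ⟨cs, |(z + W.transpose.mulVec (A.mulVec xstar - A.mulVec z)) i - xstar i|,
    h0, abs_nonneg _, hD, heq, h2, h3, h4⟩

set_option maxHeartbeats 4000000 in
/-- Theorem 7: upper bound of recovery error for HGLISTA with gain gates.
Here `g n * x n` denotes componentwise multiplication (the gain gate `gⁿ ⊙ xⁿ`),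
`g 0 = 1` (no gate at the first iteration), and `g (n+1) i - 1` plays the role of
`κᵢⁿ⁺¹`. -/
theorem hglista_recovery {M N : ℕ} (hM : 0 < M) (hN : 0 < N)
    (A : Matrix (Fin M) (Fin N) ℝ)
    (hcols : ∀ j, l2norm (fun i => A i j) = 1)
    (hμ : 0 < gmc A)
    (S : Finset (Fin N)) (hS2 : 2 ≤ S.card) (hSN : 2 * S.card ≤ N)
    (hSμ : (S.card : ℝ) < (2 + 1 / gmc A) / 4)
    (Bx : ℝ) (hBx : 0 < Bx)
    (xstar : Fin N → ℝ) (hsupp : ∀ i, xstar i ≠ 0 ↔ i ∈ S) (hxb : ∀ i, |xstar i| ≤ Bx)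
    (b : Fin M → ℝ) (hb : b = A.mulVec xstar)
    (x v u w g : ℕ → Fin N → ℝ)
    (Wbar What : ℕ → Matrix (Fin M) (Fin N) ℝ)
    (θ₁ θ₂ α ϱ : ℕ → ℝ)
    (hx0 : x 0 = 0)
    (hg0 : g 0 = fun _ => 1)
    (hWbar : ∀ n, memWs A (Wbar n)) (hWhat : ∀ n, memWs A (What n))
    (hθ₁ : ∀ n, θ₁ n = gmc A * l1norm (g n * x n - xstar))
    (hv : ∀ n, v n = soft (θ₁ n)
      (g n * x n + (Wbar n).transpose.mulVec (b - A.mulVec (g n * x n))))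
    (hθ₂ : ∀ n, θ₂ n = gmc A * l1norm (g n * u n - xstar)
      + gmc A * (((N : ℝ) - (S.card : ℝ)) / ((S.card : ℝ) - 1)) * l1norm (g n * u n))
    (hw : ∀ n, w n = soft (θ₂ n)
      (g n * u n + (What n).transpose.mulVec (b - A.mulVec (g n * u n))))
    (hα : ∀ n, (θ₁ n ≠ 0 → θ₂ n / (θ₁ n + θ₂ n) ≤ α n ∧ α n < 1) ∧ (θ₁ n = 0 → α n = 1))
    (hxs : ∀ n, x (n + 1) = α n • v n + (1 - α n) • w n)
    (hϱ1 : ∀ n, ϱ n ≤ 1)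
    (hϱsup : ∀ n, ∀ i, (i ∈ S ∧ (v n i ≠ 0 ∨ w n i ≠ 0)) →
      (max (θ₁ n) (θ₂ n) * max |v n i| |w n i| - min (θ₁ n) (θ₂ n) * min |v n i| |w n i|) /
        (max (θ₁ n) (θ₂ n) * max |v n i| |w n i| + min (θ₁ n) (θ₂ n) * min |v n i| |w n i|)
        ≤ ϱ n)
    (hgate : ∀ n, ∀ i, (i ∈ S ∧ (v n i ≠ 0 ∨ w n i ≠ 0)) →
      (if min |v n i| |w n i| = 0 then (0 : ℝ)
        else (1 - ϱ n) * max (θ₁ n) (θ₂ n) / min |v n i| |w n i|) ≤ g (n + 1) i - 1 ∧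
      g (n + 1) i - 1 ≤ (1 + ϱ n) * min (θ₁ n) (θ₂ n) / max |v n i| |w n i|)
    (sstar : ℕ → ℕ)
    (hsstar : ∀ k, sstar k = min ((Finset.univ.filter (fun i => v k i ≠ 0)).card)
      ((Finset.univ.filter (fun i => w k i ≠ 0)).card))
    (cg : ℕ → ℝ)
    (hcg : ∀ k, cg k = -Real.log (4 * gmc A * (S.card : ℝ) - 2 * gmc A
      - 2 * (1 - ϱ k) * gmc A * ((sstar k : ℕ) : ℝ)))
    (c : ℝ) (hc : c = -Real.log (4 * gmc A * (S.card : ℝ) - 2 * gmc A)) :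
    (∀ n : ℕ, ∀ i, x n i ≠ 0 → i ∈ S) ∧
    (∀ k, 0 < cg k) ∧ 0 < c ∧
    ∀ n : ℕ, 2 ≤ n →
      l2norm (x n - xstar) ≤
        (S.card : ℝ) * Bx * Real.exp (-(∑ k ∈ Finset.range (n - 1), cg k) - c) := by
  subst hb
  have hK2 : (2:ℝ) ≤ (S.card : ℝ) := by exact_mod_cast hS2
  have hN2K : 2 * (S.card : ℝ) ≤ (N : ℝ) := by exact_mod_cast hSN
  have hxs0 : ∀ i, i ∉ S → xstar i = 0 := fun i hi => by
    by_contra hne; exact hi ((hsupp i).mp hne)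
  have hc₂nn : 0 ≤ ((N : ℝ) - (S.card : ℝ)) / ((S.card : ℝ) - 1) :=
    div_nonneg (by linarith) (by linarith)
  have hθ₁nn : ∀ n, 0 ≤ θ₁ n := fun n => by
    rw [hθ₁ n]; exact mul_nonneg hμ.le (l1norm_nonneg _)
  have hθ₂nn : ∀ n, 0 ≤ θ₂ n := fun n => by
    rw [hθ₂ n]
    exact add_nonneg (mul_nonneg hμ.le (l1norm_nonneg _))
      (mul_nonneg (mul_nonneg hμ.le hc₂nn) (l1norm_nonneg _))
  have hθ₂pos : ∀ n, 0 < θ₂ n := by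
    intro n
    rcases (hθ₂nn n).lt_or_eq with h|h
    · exact h
    · exfalso
      have h' := h.symm
      rw [hθ₂ n] at h'
      have h1 : 0 ≤ gmc A * l1norm (g n * u n - xstar) :=
        mul_nonneg hμ.le (l1norm_nonneg _)
      have h2 : 0 ≤ gmc A * (((N : ℝ) - (S.card : ℝ)) / ((S.card : ℝ) - 1)) * l1norm (g n * u n) :=
        mul_nonneg (mul_nonneg hμ.le hc₂nn) (l1norm_nonneg _)
      have hc₂pos : 0 < ((N : ℝ) - (S.card : ℝ)) / ((S.card : ℝ) - 1) :=
        div_pos (by linarith) (by linarith)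
      have hL1 : l1norm (g n * u n - xstar) = 0 := by nlinarith [l1norm_nonneg (g n * u n - xstar)]
      have hL2 : l1norm (g n * u n) = 0 := by
        rw [hL1, mul_zero, zero_add] at h'
        have hpos : 0 < gmc A * (((N : ℝ) - (S.card : ℝ)) / ((S.card : ℝ) - 1)) :=
          mul_pos hμ hc₂pos
        rcases mul_eq_zero.mp h' with h''|h''
        · exact absurd h'' hpos.ne'
        · exact h''
      obtain ⟨i₀, hi₀⟩ := Finset.card_pos.mp (lt_of_lt_of_le (by norm_num) hS2)
      have hx0' : xstar i₀ ≠ 0 := (hsupp i₀).mpr hi₀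
      have hz1 : (g n * u n - xstar) i₀ = 0 := l1norm_comp_zero hL1 i₀
      have hz2 : (g n * u n) i₀ = 0 := l1norm_comp_zero hL2 i₀
      rw [Pi.sub_apply, hz2] at hz1
      exact hx0' (by linarith)
  -- soft-threshold structure of v and w
  have hVf : ∀ n i, ∃ cs D : ℝ, 0 ≤ cs ∧ 0 ≤ D ∧
      D ≤ gmc A * (l1norm (g n * x n - xstar) - |(g n * x n) i - xstar i|) ∧
      v n i = Real.sign (xstar i) * cs ∧
      cs ≤ |xstar i| ∧ |xstar i| - cs ≤ θ₁ n + D ∧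
      (cs ≠ 0 → θ₁ n - D ≤ |xstar i| - cs) := by
    intro n i
    have h := soft_step A (Wbar n) (hWbar n) hμ.le xstar (θ₁ n) (g n * x n)
      (le_of_eq (hθ₁ n).symm) i
    rw [← hv n] at h
    exact h
  have hWf : ∀ n i, ∃ cs D : ℝ, 0 ≤ cs ∧ 0 ≤ D ∧
      D ≤ gmc A * (l1norm (g n * u n - xstar) - |(g n * u n) i - xstar i|) ∧
      w n i = Real.sign (xstar i) * cs ∧
      cs ≤ |xstar i| ∧ |xstar i| - cs ≤ θ₂ n + D ∧
      (cs ≠ 0 → θ₂ n - D ≤ |xstar i| - cs) := by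
    intro n i
    have hcond : gmc A * l1norm (g n * u n - xstar) ≤ θ₂ n := by
      rw [hθ₂ n]
      have : 0 ≤ gmc A * (((N : ℝ) - (S.card : ℝ)) / ((S.card : ℝ) - 1)) * l1norm (g n * u n) :=
        mul_nonneg (mul_nonneg hμ.le hc₂nn) (l1norm_nonneg _)
      linarith
    have h := soft_step A (What n) (hWhat n) hμ.le xstar (θ₂ n) (g n * u n) hcond i
    rw [← hw n] at h
    exact h
  choose cv Dv hcv0 hDv0 hDvle hveq hcvle hC3v hC4v using hVf
  choose cw Dw hcw0 hDw0 hDwle hweq hcwle hC3w hC4w using hWf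
  have hvabs : ∀ n i, i ∈ S → |v n i| = cv n i := fun n i hi => by
    rw [hveq n i, abs_mul, abs_sign_of_ne ((hsupp i).mpr hi), one_mul, abs_of_nonneg (hcv0 n i)]
  have hwabs : ∀ n i, i ∈ S → |w n i| = cw n i := fun n i hi => by
    rw [hweq n i, abs_mul, abs_sign_of_ne ((hsupp i).mpr hi), one_mul, abs_of_nonneg (hcw0 n i)]
  have hvS : ∀ n i, i ∉ S → v n i = 0 := fun n i hi => by
    rw [hveq n i, hxs0 i hi, Real.sign_zero, zero_mul]
  have hwS : ∀ n i, i ∉ S → w n i = 0 := fun n i hi => by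
    rw [hweq n i, hxs0 i hi, Real.sign_zero, zero_mul]
  have hsx1 : ∀ n i, x (n+1) i = Real.sign (xstar i) * (α n * cv n i + (1 - α n) * cw n i) := by
    intro n i
    rw [hxs n]
    simp only [Pi.add_apply, Pi.smul_apply, smul_eq_mul]
    rw [hveq n i, hweq n i]; ring
  have hsuppx : ∀ n i, i ∉ S → x n i = 0 := by
    intro n
    cases n with
    | zero => intro i _; rw [hx0]; rfl
    | succ m => intro i hi; rw [hsx1 m i, hxs0 i hi, Real.sign_zero, zero_mul]
  have hEoff : ∀ n i, i ∉ S → (g n * x n) i - xstar i = 0 := fun n i hi => by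
    rw [Pi.mul_apply, hsuppx n i hi, hxs0 i hi, mul_zero, sub_zero]
  have hEsum : ∀ n, ∑ i ∈ S, |(g n * x n) i - xstar i| = l1norm (g n * x n - xstar) := by
    intro n
    simp only [l1norm, Pi.sub_apply]
    exact Finset.sum_subset (Finset.subset_univ S)
      (fun i _ hi => by rw [show (g n * x n) i - xstar i = 0 from hEoff n i hi, abs_zero])
  -- sums of residuals over S
  have hsumDv : ∀ n, ∑ i ∈ S, Dv n i ≤ ((S.card : ℝ) - 1) * θ₁ n := by
    intro n
    calc ∑ i ∈ S, Dv n i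
        ≤ ∑ i ∈ S, (gmc A * l1norm (g n * x n - xstar) - gmc A * |(g n * x n) i - xstar i|) := by
          apply Finset.sum_le_sum
          intro i _
          have h := hDvle n i
          rw [mul_sub] at h
          exact h
      _ = (S.card : ℝ) * (gmc A * l1norm (g n * x n - xstar))
            - gmc A * ∑ i ∈ S, |(g n * x n) i - xstar i| := by
          rw [Finset.sum_sub_distrib, Finset.sum_const, nsmul_eq_mul, ← Finset.mul_sum]
      _ = ((S.card : ℝ) - 1) * θ₁ n := by
          rw [hEsum n, hθ₁ n]; ring
  have hsumDw : ∀ n, ∑ i ∈ S, Dw n i ≤ ((S.card : ℝ) - 1) * θ₂ n := by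
    intro n
    have hcompl : ∑ i ∈ Sᶜ, |(g n * u n) i - xstar i| ≤ l1norm (g n * u n) := by
      have h1 : ∀ i ∈ Sᶜ, |(g n * u n) i - xstar i| = |(g n * u n) i| := by
        intro i hi
        rw [hxs0 i (Finset.mem_compl.mp hi), sub_zero]
      rw [Finset.sum_congr rfl h1]
      exact Finset.sum_le_sum_of_subset_of_nonneg (Finset.subset_univ _)
        (fun i _ _ => abs_nonneg _)
    have hsplit : ∑ i ∈ S, |(g n * u n) i - xstar i| + ∑ i ∈ Sᶜ, |(g n * u n) i - xstar i|
        = l1norm (g n * u n - xstar) := by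
      simp only [l1norm, Pi.sub_apply]
      exact Finset.sum_add_sum_compl S _
    have hTlb : l1norm (g n * u n - xstar) - l1norm (g n * u n)
        ≤ ∑ i ∈ S, |(g n * u n) i - xstar i| := by linarith
    have hc2 : ((S.card : ℝ) - 1) * (((N : ℝ) - (S.card : ℝ)) / ((S.card : ℝ) - 1))
        = (N : ℝ) - (S.card : ℝ) := by
      rw [mul_comm]
      exact div_mul_cancel₀ _ (ne_of_gt (by linarith : (0:ℝ) < (S.card : ℝ) - 1))
    have hμG : 0 ≤ gmc A * l1norm (g n * u n) := mul_nonneg hμ.le (l1norm_nonneg _)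
    have h5 : gmc A * l1norm (g n * u n) ≤
        ((S.card : ℝ) - 1) * (gmc A * (((N : ℝ) - (S.card : ℝ)) / ((S.card : ℝ) - 1))
          * l1norm (g n * u n)) := by
      have hNK1 : (1:ℝ) ≤ (N : ℝ) - (S.card : ℝ) := by linarith
      calc gmc A * l1norm (g n * u n) = 1 * (gmc A * l1norm (g n * u n)) := by ring
        _ ≤ ((N : ℝ) - (S.card : ℝ)) * (gmc A * l1norm (g n * u n)) :=
            mul_le_mul_of_nonneg_right hNK1 hμG
        _ = ((S.card : ℝ) - 1) * (gmc A * (((N : ℝ) - (S.card : ℝ)) / ((S.card : ℝ) - 1))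
              * l1norm (g n * u n)) := by
            rw [show ((S.card : ℝ) - 1) * (gmc A * (((N : ℝ) - (S.card : ℝ)) / ((S.card : ℝ) - 1))
              * l1norm (g n * u n)) = (((S.card : ℝ) - 1) * (((N : ℝ) - (S.card : ℝ))
                / ((S.card : ℝ) - 1))) * (gmc A * l1norm (g n * u n)) from by ring, hc2]
    have h6 : gmc A * (l1norm (g n * u n - xstar) - l1norm (g n * u n))
        ≤ gmc A * ∑ i ∈ S, |(g n * u n) i - xstar i| :=
      mul_le_mul_of_nonneg_left hTlb hμ.le
    calc ∑ i ∈ S, Dw n i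
        ≤ ∑ i ∈ S, (gmc A * l1norm (g n * u n - xstar) - gmc A * |(g n * u n) i - xstar i|) := by
          apply Finset.sum_le_sum
          intro i _
          have h := hDwle n i
          rw [mul_sub] at h
          exact h
      _ = (S.card : ℝ) * (gmc A * l1norm (g n * u n - xstar))
            - gmc A * ∑ i ∈ S, |(g n * u n) i - xstar i| := by
          rw [Finset.sum_sub_distrib, Finset.sum_const, nsmul_eq_mul, ← Finset.mul_sum]
      _ ≤ (S.card : ℝ) * (gmc A * l1norm (g n * u n - xstar))
            - gmc A * (l1norm (g n * u n - xstar) - l1norm (g n * u n)) := by linarith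
      _ = ((S.card : ℝ) - 1) * (gmc A * l1norm (g n * u n - xstar))
            + gmc A * l1norm (g n * u n) := by ring
      _ ≤ ((S.card : ℝ) - 1) * (gmc A * l1norm (g n * u n - xstar))
            + ((S.card : ℝ) - 1) * (gmc A * (((N : ℝ) - (S.card : ℝ)) / ((S.card : ℝ) - 1))
              * l1norm (g n * u n)) := by linarith
      _ = ((S.card : ℝ) - 1) * θ₂ n := by rw [hθ₂ n]; ring
    -- main one-iteration estimates
  have step : ∀ n,
      l1norm (x (n+1) - xstar)
        ≤ 2 * gmc A * (2 * (S.card : ℝ) - 1) * l1norm (g n * x n - xstar) ∧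
      l1norm (g (n+1) * x (n+1) - xstar) ≤
        (2 * gmc A * (2 * (S.card : ℝ) - 1) - 2 * (1 - ϱ n) * gmc A * ((sstar n : ℕ) : ℝ))
          * l1norm (g n * x n - xstar) := by
    intro n
    have hxsum : l1norm (x (n+1) - xstar) = ∑ i ∈ S, |x (n+1) i - xstar i| := by
      simp only [l1norm, Pi.sub_apply]
      exact (Finset.sum_subset (Finset.subset_univ S)
        (fun i _ hi => by rw [hsuppx (n+1) i hi, hxs0 i hi, sub_zero, abs_zero])).symm
    have hgxsum : l1norm (g (n+1) * x (n+1) - xstar)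
        = ∑ i ∈ S, |g (n+1) i * x (n+1) i - xstar i| := by
      simp only [l1norm, Pi.sub_apply, Pi.mul_apply]
      exact (Finset.sum_subset (Finset.subset_univ S)
        (fun i _ hi => by rw [hsuppx (n+1) i hi, hxs0 i hi, mul_zero, sub_zero, abs_zero])).symm
    by_cases hz : θ₁ n = 0
    · -- exact recovery case
      have hL0 : l1norm (g n * x n - xstar) = 0 := by
        have h := hθ₁ n
        rw [hz] at h
        rcases mul_eq_zero.mp h.symm with h'|h'
        · exact absurd h' hμ.ne'
        · exact h'
      have hcveq : ∀ i, cv n i = |xstar i| := by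
        intro i
        have hD0 : Dv n i = 0 := by
          have h := hDvle n i
          rw [hL0] at h
          have h2 : gmc A * (0 - |(g n * x n) i - xstar i|) ≤ 0 := by
            have h3 : 0 ≤ gmc A * |(g n * x n) i - xstar i| :=
              mul_nonneg hμ.le (abs_nonneg _)
            nlinarith
          linarith [hDv0 n i]
        have h3 := hC3v n i
        rw [hz, hD0] at h3
        linarith [hcvle n i]
      have hveqx : ∀ i, v n i = xstar i := fun i => by
        rw [hveq n i, hcveq i, sign_mul_abs']
      have hα1 : α n = 1 := (hα n).2 hz
      have hxeq : ∀ i, x (n+1) i = xstar i := by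
        intro i
        rw [hsx1 n i, hα1, hcveq i]
        norm_num [sign_mul_abs']
      constructor
      · rw [hxsum, hL0, mul_zero]
        apply le_of_eq
        apply Finset.sum_eq_zero
        intro i _
        rw [hxeq i, sub_self, abs_zero]
      · rw [hgxsum, hL0, mul_zero]
        apply le_of_eq
        apply Finset.sum_eq_zero
        intro i hiS
        have hvne : v n i ≠ 0 := by rw [hveqx i]; exact (hsupp i).mpr hiS
        have hg' := hgate n i ⟨hiS, Or.inl hvne⟩
        have hmin0 : min (θ₁ n) (θ₂ n) = 0 := by rw [hz]; exact min_eq_left (hθ₂nn n)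
        have hub : g (n+1) i - 1 ≤ 0 := by
          have h := hg'.2
          rw [hmin0, mul_zero, zero_div] at h
          exact h
        have hlb : 0 ≤ g (n+1) i - 1 := by
          refine le_trans ?_ hg'.1
          split_ifs
          · exact le_refl 0
          · exact div_nonneg (mul_nonneg (by linarith [hϱ1 n])
              (le_trans (hθ₂nn n) (le_max_right (θ₁ n) (θ₂ n))))
              (le_min (abs_nonneg _) (abs_nonneg _))
        have hg1 : g (n+1) i = 1 := by linarith
        rw [hg1, hxeq i, one_mul, sub_self, abs_zero]
    · -- contraction case
      have hθ₁pos : 0 < θ₁ n := lt_of_le_of_ne (hθ₁nn n) (Ne.symm hz)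
      obtain ⟨hα1, hα2⟩ := (hα n).1 hz
      have hθ12pos : 0 < θ₁ n + θ₂ n := by linarith [hθ₂pos n, hθ₁nn n]
      have h0α : 0 ≤ α n := le_trans (div_nonneg (hθ₂nn n) hθ12pos.le) hα1
      have h1α : 0 ≤ 1 - α n := by linarith
      have hαθ : (1 - α n) * θ₂ n ≤ α n * θ₁ n := by
        have h := (div_le_iff₀ hθ12pos).mp hα1
        have h' : α n * (θ₁ n + θ₂ n) = α n * θ₁ n + α n * θ₂ n := by ring
        linarith
      have hθb2 : α n * θ₁ n + (1 - α n) * θ₂ n ≤ 2 * θ₁ n := by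
        have h' : 0 ≤ (1 - α n) * θ₁ n := mul_nonneg (sub_nonneg.mpr hα2.le) hθ₁pos.le
        linarith [hαθ, h']
      have hθbmin : min (θ₁ n) (θ₂ n) ≤ α n * θ₁ n + (1 - α n) * θ₂ n := by
        have p1 : α n * min (θ₁ n) (θ₂ n) ≤ α n * θ₁ n :=
          mul_le_mul_of_nonneg_left (min_le_left _ _) h0α
        have p2 : (1 - α n) * min (θ₁ n) (θ₂ n) ≤ (1 - α n) * θ₂ n :=
          mul_le_mul_of_nonneg_left (min_le_right _ _) h1α
        have hid : α n * min (θ₁ n) (θ₂ n) + (1 - α n) * min (θ₁ n) (θ₂ n)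
            = min (θ₁ n) (θ₂ n) := by ring
        linarith [p1, p2, hid]
      have hθbmax : α n * θ₁ n + (1 - α n) * θ₂ n ≤ max (θ₁ n) (θ₂ n) := by
        have p1 : α n * θ₁ n ≤ α n * max (θ₁ n) (θ₂ n) :=
          mul_le_mul_of_nonneg_left (le_max_left _ _) h0α
        have p2 : (1 - α n) * θ₂ n ≤ (1 - α n) * max (θ₁ n) (θ₂ n) :=
          mul_le_mul_of_nonneg_left (le_max_right _ _) h1α
        have hid : α n * max (θ₁ n) (θ₂ n) + (1 - α n) * max (θ₁ n) (θ₂ n)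
            = max (θ₁ n) (θ₂ n) := by ring
        linarith [p1, p2, hid]
      have hat : ∀ i, α n * cv n i + (1 - α n) * cw n i ≤ |xstar i| := by
        intro i
        have p1 : α n * cv n i ≤ α n * |xstar i| := mul_le_mul_of_nonneg_left (hcvle n i) h0α
        have p2 : (1 - α n) * cw n i ≤ (1 - α n) * |xstar i| :=
          mul_le_mul_of_nonneg_left (hcwle n i) h1α
        have hid : α n * |xstar i| + (1 - α n) * |xstar i| = |xstar i| := by ring
        linarith [p1, p2, hid]
      have ha0 : ∀ i, 0 ≤ α n * cv n i + (1 - α n) * cw n i := fun i =>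
        add_nonneg (mul_nonneg h0α (hcv0 n i)) (mul_nonneg h1α (hcw0 n i))
      have hd_ub : ∀ i, |xstar i| - (α n * cv n i + (1 - α n) * cw n i)
          ≤ α n * Dv n i + (1 - α n) * Dw n i + (α n * θ₁ n + (1 - α n) * θ₂ n) := by
        intro i
        have p1 : α n * (|xstar i| - cv n i) ≤ α n * (θ₁ n + Dv n i) :=
          mul_le_mul_of_nonneg_left (hC3v n i) h0α
        have p2 : (1 - α n) * (|xstar i| - cw n i) ≤ (1 - α n) * (θ₂ n + Dw n i) :=
          mul_le_mul_of_nonneg_left (hC3w n i) h1α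
        have hid : α n * |xstar i| + (1 - α n) * |xstar i| = |xstar i| := by ring
        linarith [p1, p2, hid]
      have hxabs : ∀ i ∈ S, |x (n+1) i - xstar i|
          = |xstar i| - (α n * cv n i + (1 - α n) * cw n i) := by
        intro i hiS
        have hti : xstar i ≠ 0 := (hsupp i).mpr hiS
        have heq2 : x (n+1) i - xstar i
            = Real.sign (xstar i) * ((α n * cv n i + (1 - α n) * cw n i) - |xstar i|) := by
          rw [hsx1 n i, mul_sub, sign_mul_abs']
        rw [heq2, abs_mul, abs_sign_of_ne hti, one_mul, abs_of_nonpos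
          (by linarith [hat i] : (α n * cv n i + (1 - α n) * cw n i) - |xstar i| ≤ 0)]
        ring
      have step1 : l1norm (x (n+1) - xstar)
          ≤ 2 * gmc A * (2 * (S.card : ℝ) - 1) * l1norm (g n * x n - xstar) := by
        have hb1 : α n * ∑ i ∈ S, Dv n i ≤ α n * (((S.card : ℝ) - 1) * θ₁ n) :=
          mul_le_mul_of_nonneg_left (hsumDv n) h0α
        have hb2 : (1 - α n) * ∑ i ∈ S, Dw n i ≤ (1 - α n) * (((S.card : ℝ) - 1) * θ₂ n) :=
          mul_le_mul_of_nonneg_left (hsumDw n) h1α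
        have h7 : (2 * (S.card : ℝ) - 1) * (α n * θ₁ n + (1 - α n) * θ₂ n)
            ≤ (2 * (S.card : ℝ) - 1) * (2 * θ₁ n) :=
          mul_le_mul_of_nonneg_left hθb2 (by linarith)
        have h8 : 2 * gmc A * (2 * (S.card : ℝ) - 1) * l1norm (g n * x n - xstar)
            = (2 * (S.card : ℝ) - 1) * (2 * θ₁ n) := by rw [hθ₁ n]; ring
        calc l1norm (x (n+1) - xstar) = ∑ i ∈ S, |x (n+1) i - xstar i| := hxsum
          _ ≤ ∑ i ∈ S, (α n * Dv n i + (1 - α n) * Dw n i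
                + (α n * θ₁ n + (1 - α n) * θ₂ n)) := by
              apply Finset.sum_le_sum
              intro i hiS
              rw [hxabs i hiS]
              exact hd_ub i
          _ = α n * ∑ i ∈ S, Dv n i + (1 - α n) * ∑ i ∈ S, Dw n i
                + (S.card : ℝ) * (α n * θ₁ n + (1 - α n) * θ₂ n) := by
              rw [Finset.sum_add_distrib, Finset.sum_add_distrib, Finset.sum_const,
                nsmul_eq_mul, ← Finset.mul_sum, ← Finset.mul_sum]
          _ ≤ 2 * gmc A * (2 * (S.card : ℝ) - 1) * l1norm (g n * x n - xstar) := by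
              rw [h8]
              linarith [hb1, hb2, h7]
      have peri : ∀ i ∈ S, |g (n+1) i * x (n+1) i - xstar i|
          ≤ α n * Dv n i + (1 - α n) * Dw n i
            + (if v n i ≠ 0 ∨ w n i ≠ 0 then 2 * ϱ n * θ₁ n
               else α n * θ₁ n + (1 - α n) * θ₂ n) := by
        intro i hiS
        have hti : xstar i ≠ 0 := (hsupp i).mpr hiS
        have hρ0 : 0 ≤ α n * Dv n i + (1 - α n) * Dw n i :=
          add_nonneg (mul_nonneg h0α (hDv0 n i)) (mul_nonneg h1α (hDw0 n i))
        have heq2 : g (n+1) i * x (n+1) i - xstar i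
            = Real.sign (xstar i) * (g (n+1) i * (α n * cv n i + (1 - α n) * cw n i)
                - |xstar i|) := by
          rw [mul_sub, sign_mul_abs', hsx1 n i]
          ring
        have habs2 : |g (n+1) i * x (n+1) i - xstar i|
            = abs (g (n+1) i * (α n * cv n i + (1 - α n) * cw n i) - |xstar i|) := by
          rw [heq2, abs_mul, abs_sign_of_ne hti, one_mul]
        rw [habs2]
        by_cases hP : v n i ≠ 0 ∨ w n i ≠ 0
        · rw [if_pos hP]
          have hg' := hgate n i ⟨hiS, hP⟩
          have hϱi := hϱsup n i ⟨hiS, hP⟩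
          rw [hvabs n i hiS, hwabs n i hiS] at hg' hϱi
          have hrep : g (n+1) i * (α n * cv n i + (1 - α n) * cw n i) - |xstar i|
              = (g (n+1) i - 1) * (α n * cv n i + (1 - α n) * cw n i)
                - (|xstar i| - (α n * cv n i + (1 - α n) * cw n i)) := by ring
          rw [hrep]
          have hθM0 : 0 < max (θ₁ n) (θ₂ n) := lt_of_lt_of_le (hθ₂pos n) (le_max_right _ _)
          have hθm0 : 0 ≤ min (θ₁ n) (θ₂ n) := le_min (hθ₁nn n) (hθ₂nn n)
          have hθm1 : min (θ₁ n) (θ₂ n) ≤ θ₁ n := min_le_left _ _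
          have hΞa : α n * cv n i + (1 - α n) * cw n i ≤ max (cv n i) (cw n i) := by
            have p1 : α n * cv n i ≤ α n * max (cv n i) (cw n i) :=
              mul_le_mul_of_nonneg_left (le_max_left _ _) h0α
            have p2 : (1 - α n) * cw n i ≤ (1 - α n) * max (cv n i) (cw n i) :=
              mul_le_mul_of_nonneg_left (le_max_right _ _) h1α
            have hid : α n * max (cv n i) (cw n i) + (1 - α n) * max (cv n i) (cw n i)
                = max (cv n i) (cw n i) := by ring
            linarith [p1, p2, hid]
          have hΥa : min (cv n i) (cw n i) ≤ α n * cv n i + (1 - α n) * cw n i := by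
            have p1 : α n * min (cv n i) (cw n i) ≤ α n * cv n i :=
              mul_le_mul_of_nonneg_left (min_le_left _ _) h0α
            have p2 : (1 - α n) * min (cv n i) (cw n i) ≤ (1 - α n) * cw n i :=
              mul_le_mul_of_nonneg_left (min_le_right _ _) h1α
            have hid : α n * min (cv n i) (cw n i) + (1 - α n) * min (cv n i) (cw n i)
                = min (cv n i) (cw n i) := by ring
            linarith [p1, p2, hid]
          have hΞpos : 0 < max (cv n i) (cw n i) := by
            rcases hP with h|h
            · have h' : 0 < cv n i := by
                rw [← hvabs n i hiS]; exact abs_pos.mpr h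
              exact lt_of_lt_of_le h' (le_max_left _ _)
            · have h' : 0 < cw n i := by
                rw [← hwabs n i hiS]; exact abs_pos.mpr h
              exact lt_of_lt_of_le h' (le_max_right _ _)
          by_cases hΥ : min (cv n i) (cw n i) = 0
          · -- ϱ n = 1 in this case
            have hϱeq : ϱ n = 1 := by
              rw [hΥ, mul_zero, sub_zero, add_zero,
                div_self (ne_of_gt (mul_pos hθM0 hΞpos))] at hϱi
              exact le_antisymm (hϱ1 n) hϱi
            have hglb : 0 ≤ g (n+1) i - 1 := by
              have h := hg'.1
              rw [if_pos hΥ] at h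
              exact h
            have hka0 : 0 ≤ (g (n+1) i - 1) * (α n * cv n i + (1 - α n) * cw n i) :=
              mul_nonneg hglb (ha0 i)
            have hka_ub : (g (n+1) i - 1) * (α n * cv n i + (1 - α n) * cw n i)
                ≤ (1 + ϱ n) * min (θ₁ n) (θ₂ n) := by
              have h3 : 0 ≤ (1 + ϱ n) * min (θ₁ n) (θ₂ n) / max (cv n i) (cw n i) :=
                div_nonneg (mul_nonneg (by linarith [hϱeq]) hθm0) hΞpos.le
              calc (g (n+1) i - 1) * (α n * cv n i + (1 - α n) * cw n i)
                  ≤ ((1 + ϱ n) * min (θ₁ n) (θ₂ n) / max (cv n i) (cw n i))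
                    * (α n * cv n i + (1 - α n) * cw n i) :=
                    mul_le_mul_of_nonneg_right hg'.2 (ha0 i)
                _ ≤ ((1 + ϱ n) * min (θ₁ n) (θ₂ n) / max (cv n i) (cw n i))
                    * max (cv n i) (cw n i) := mul_le_mul_of_nonneg_left hΞa h3
                _ = (1 + ϱ n) * min (θ₁ n) (θ₂ n) := div_mul_cancel₀ _ (ne_of_gt hΞpos)
            rw [hϱeq] at hka_ub ⊢
            refine abs_le.mpr ⟨?_, ?_⟩
            · linarith [hka0, hd_ub i, hθb2]
            · linarith [hka_ub, hat i, hθm1, hρ0]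
          · have hΥpos : 0 < min (cv n i) (cw n i) :=
              lt_of_le_of_ne (le_min (hcv0 n i) (hcw0 n i)) (Ne.symm hΥ)
            have hcvpos : 0 < cv n i := lt_of_lt_of_le hΥpos (min_le_left _ _)
            have hcwpos : 0 < cw n i := lt_of_lt_of_le hΥpos (min_le_right _ _)
            have hϱ0 : 0 ≤ ϱ n := by
              refine le_trans (div_nonneg ?_ ?_) hϱi
              · exact sub_nonneg.mpr (mul_le_mul min_le_max min_le_max
                  (le_min (hcv0 n i) (hcw0 n i)) hθM0.le)
              · exact add_nonneg (mul_nonneg hθM0.le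
                  (le_trans (hcv0 n i) (le_max_left _ _)))
                  (mul_nonneg hθm0 (le_min (hcv0 n i) (hcw0 n i)))
            have hdlb : α n * θ₁ n + (1 - α n) * θ₂ n - (α n * Dv n i + (1 - α n) * Dw n i)
                ≤ |xstar i| - (α n * cv n i + (1 - α n) * cw n i) := by
              have p1 : α n * (θ₁ n - Dv n i) ≤ α n * (|xstar i| - cv n i) :=
                mul_le_mul_of_nonneg_left (hC4v n i (ne_of_gt hcvpos)) h0α
              have p2 : (1 - α n) * (θ₂ n - Dw n i) ≤ (1 - α n) * (|xstar i| - cw n i) :=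
                mul_le_mul_of_nonneg_left (hC4w n i (ne_of_gt hcwpos)) h1α
              have hid : α n * |xstar i| + (1 - α n) * |xstar i| = |xstar i| := by ring
              linarith [p1, p2, hid]
            have hglb : (1 - ϱ n) * max (θ₁ n) (θ₂ n) / min (cv n i) (cw n i)
                ≤ g (n+1) i - 1 := by
              have h := hg'.1
              rw [if_neg hΥ] at h
              exact h
            have hka_lb : (1 - ϱ n) * max (θ₁ n) (θ₂ n)
                ≤ (g (n+1) i - 1) * (α n * cv n i + (1 - α n) * cw n i) := by
              have h2 : 0 ≤ (1 - ϱ n) * max (θ₁ n) (θ₂ n) / min (cv n i) (cw n i) :=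
                div_nonneg (mul_nonneg (by linarith [hϱ1 n]) hθM0.le) hΥpos.le
              calc (1 - ϱ n) * max (θ₁ n) (θ₂ n)
                  = ((1 - ϱ n) * max (θ₁ n) (θ₂ n) / min (cv n i) (cw n i))
                    * min (cv n i) (cw n i) := (div_mul_cancel₀ _ (ne_of_gt hΥpos)).symm
                _ ≤ ((1 - ϱ n) * max (θ₁ n) (θ₂ n) / min (cv n i) (cw n i))
                    * (α n * cv n i + (1 - α n) * cw n i) :=
                    mul_le_mul_of_nonneg_left hΥa h2
                _ ≤ (g (n+1) i - 1) * (α n * cv n i + (1 - α n) * cw n i) :=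
                    mul_le_mul_of_nonneg_right hglb (ha0 i)
            have hka_ub : (g (n+1) i - 1) * (α n * cv n i + (1 - α n) * cw n i)
                ≤ (1 + ϱ n) * min (θ₁ n) (θ₂ n) := by
              have h3 : 0 ≤ (1 + ϱ n) * min (θ₁ n) (θ₂ n) / max (cv n i) (cw n i) :=
                div_nonneg (mul_nonneg (by linarith) hθm0) hΞpos.le
              calc (g (n+1) i - 1) * (α n * cv n i + (1 - α n) * cw n i)
                  ≤ ((1 + ϱ n) * min (θ₁ n) (θ₂ n) / max (cv n i) (cw n i))
                    * (α n * cv n i + (1 - α n) * cw n i) :=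
                    mul_le_mul_of_nonneg_right hg'.2 (ha0 i)
                _ ≤ ((1 + ϱ n) * min (θ₁ n) (θ₂ n) / max (cv n i) (cw n i))
                    * max (cv n i) (cw n i) := mul_le_mul_of_nonneg_left hΞa h3
                _ = (1 + ϱ n) * min (θ₁ n) (θ₂ n) := div_mul_cancel₀ _ (ne_of_gt hΞpos)
            have hM1 : (1 + ϱ n) * min (θ₁ n) (θ₂ n) - (α n * θ₁ n + (1 - α n) * θ₂ n)
                ≤ 2 * ϱ n * θ₁ n := by
              have p := mul_le_mul_of_nonneg_left hθm1 hϱ0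
              linarith [p, hθbmin, mul_nonneg hϱ0 (hθ₁nn n)]
            have hM2 : (α n * θ₁ n + (1 - α n) * θ₂ n) - (1 - ϱ n) * max (θ₁ n) (θ₂ n)
                ≤ 2 * ϱ n * θ₁ n := by
              rcases le_or_gt (max (θ₁ n) (θ₂ n)) (2 * θ₁ n) with hcase|hcase
              · have p := mul_le_mul_of_nonneg_left hcase hϱ0
                linarith [p, hθbmax]
              · have p := mul_le_mul_of_nonneg_left hcase.le
                  (show (0:ℝ) ≤ 1 - ϱ n by linarith [hϱ1 n])
                linarith [p, hθb2]
            refine abs_le.mpr ⟨?_, ?_⟩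
            · linarith [hka_lb, hd_ub i, hM2]
            · linarith [hka_ub, hdlb, hM1]
        · rw [if_neg hP]
          push_neg at hP
          have hcv00 : cv n i = 0 := by rw [← hvabs n i hiS, hP.1, abs_zero]
          have hcw00 : cw n i = 0 := by rw [← hwabs n i hiS, hP.2, abs_zero]
          have h1 := hC3v n i
          rw [hcv00, sub_zero] at h1
          have h2 := hC3w n i
          rw [hcw00, sub_zero] at h2
          have p1 : α n * |xstar i| ≤ α n * (θ₁ n + Dv n i) :=
            mul_le_mul_of_nonneg_left h1 h0α
          have p2 : (1 - α n) * |xstar i| ≤ (1 - α n) * (θ₂ n + Dw n i) :=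
            mul_le_mul_of_nonneg_left h2 h1α
          rw [hcv00, hcw00]
          have h3 : abs (g (n+1) i * (α n * 0 + (1 - α n) * 0) - |xstar i|) = |xstar i| := by
            simp
          rw [h3]
          have hid : α n * |xstar i| + (1 - α n) * |xstar i| = |xstar i| := by ring
          linarith [p1, p2, hid]
      have step2 : l1norm (g (n+1) * x (n+1) - xstar) ≤
          (2 * gmc A * (2 * (S.card : ℝ) - 1) - 2 * (1 - ϱ n) * gmc A * ((sstar n : ℕ) : ℝ))
            * l1norm (g n * x n - xstar) := by
        have hb1 : α n * ∑ i ∈ S, Dv n i ≤ α n * (((S.card : ℝ) - 1) * θ₁ n) :=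
          mul_le_mul_of_nonneg_left (hsumDv n) h0α
        have hb2 : (1 - α n) * ∑ i ∈ S, Dw n i ≤ (1 - α n) * (((S.card : ℝ) - 1) * θ₂ n) :=
          mul_le_mul_of_nonneg_left (hsumDw n) h1α
        have hite : ∑ i ∈ S, (if v n i ≠ 0 ∨ w n i ≠ 0 then 2 * ϱ n * θ₁ n
              else α n * θ₁ n + (1 - α n) * θ₂ n)
            = ((S.filter (fun i => v n i ≠ 0 ∨ w n i ≠ 0)).card : ℝ) * (2 * ϱ n * θ₁ n)
              + ((S.filter (fun i => ¬(v n i ≠ 0 ∨ w n i ≠ 0))).card : ℝ)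
                * (α n * θ₁ n + (1 - α n) * θ₂ n) := by
          rw [Finset.sum_ite, Finset.sum_const, Finset.sum_const, nsmul_eq_mul, nsmul_eq_mul]
        have hqq' : (S.filter (fun i => v n i ≠ 0 ∨ w n i ≠ 0)).card
            + (S.filter (fun i => ¬(v n i ≠ 0 ∨ w n i ≠ 0))).card = S.card :=
          Finset.card_filter_add_card_filter_not _
        have hq'c : (((S.filter (fun i => ¬(v n i ≠ 0 ∨ w n i ≠ 0))).card : ℕ) : ℝ)
            = (S.card : ℝ) - ((S.filter (fun i => v n i ≠ 0 ∨ w n i ≠ 0)).card : ℝ) := by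
          have h := congrArg (fun t : ℕ => (t : ℝ)) hqq'
          push_cast at h
          linarith
        have hsq : ((sstar n : ℕ) : ℝ)
            ≤ ((S.filter (fun i => v n i ≠ 0 ∨ w n i ≠ 0)).card : ℝ) := by
          have hsub : Finset.univ.filter (fun i => v n i ≠ 0)
              ⊆ S.filter (fun i => v n i ≠ 0 ∨ w n i ≠ 0) := by
            intro i hi
            rw [Finset.mem_filter] at hi ⊢
            have hiS : i ∈ S := by
              by_contra hiS
              exact hi.2 (hvS n i hiS)
            exact ⟨hiS, Or.inl hi.2⟩
          have h : sstar n ≤ (S.filter (fun i => v n i ≠ 0 ∨ w n i ≠ 0)).card := by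
            rw [hsstar n]
            exact le_trans (min_le_left _ _) (Finset.card_le_card hsub)
          exact_mod_cast h
        have hqK : (((S.filter (fun i => v n i ≠ 0 ∨ w n i ≠ 0)).card : ℕ) : ℝ)
            ≤ (S.card : ℝ) := by
          exact_mod_cast Finset.card_le_card (Finset.filter_subset _ _)
        have final : α n * (((S.card : ℝ) - 1) * θ₁ n) + (1 - α n) * (((S.card : ℝ) - 1) * θ₂ n)
              + (((S.filter (fun i => v n i ≠ 0 ∨ w n i ≠ 0)).card : ℝ) * (2 * ϱ n * θ₁ n)
                + ((S.filter (fun i => ¬(v n i ≠ 0 ∨ w n i ≠ 0))).card : ℝ)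
                  * (α n * θ₁ n + (1 - α n) * θ₂ n))
            ≤ (2 * gmc A * (2 * (S.card : ℝ) - 1)
                - 2 * (1 - ϱ n) * gmc A * ((sstar n : ℕ) : ℝ)) * l1norm (g n * x n - xstar) := by
          have hRHS : (2 * gmc A * (2 * (S.card : ℝ) - 1)
                - 2 * (1 - ϱ n) * gmc A * ((sstar n : ℕ) : ℝ)) * l1norm (g n * x n - xstar)
              = 2 * (2 * (S.card : ℝ) - 1) * θ₁ n
                - 2 * (1 - ϱ n) * ((sstar n : ℕ) : ℝ) * θ₁ n := by
            rw [hθ₁ n]; ring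
          rw [hRHS, hq'c]
          rcases Nat.eq_zero_or_pos (S.filter (fun i => v n i ≠ 0 ∨ w n i ≠ 0)).card
            with hq0|hqpos
          · have hs0 : ((sstar n : ℕ) : ℝ) = 0 := by
              have h := hsq
              rw [hq0] at h
              have h' : ((sstar n : ℕ) : ℝ) ≤ 0 := by exact_mod_cast h
              linarith [Nat.cast_nonneg (sstar n) (α := ℝ)]
            rw [hs0, hq0]
            have h7 : (2 * (S.card : ℝ) - 1) * (α n * θ₁ n + (1 - α n) * θ₂ n)
                ≤ (2 * (S.card : ℝ) - 1) * (2 * θ₁ n) :=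
              mul_le_mul_of_nonneg_left hθb2 (by linarith)
            push_cast
            linarith [h7]
          · obtain ⟨i, hi⟩ := Finset.card_pos.mp hqpos
            rw [Finset.mem_filter] at hi
            have hϱi := hϱsup n i ⟨hi.1, hi.2⟩
            have hθM0 : 0 < max (θ₁ n) (θ₂ n) := lt_of_lt_of_le (hθ₂pos n) (le_max_right _ _)
            have hθm0 : 0 ≤ min (θ₁ n) (θ₂ n) := le_min (hθ₁nn n) (hθ₂nn n)
            have hϱ0 : 0 ≤ ϱ n := by
              refine le_trans (div_nonneg ?_ ?_) hϱi
              · exact sub_nonneg.mpr (mul_le_mul min_le_max min_le_max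
                  (le_min (abs_nonneg _) (abs_nonneg _)) hθM0.le)
              · exact add_nonneg (mul_nonneg hθM0.le
                  (le_trans (abs_nonneg _) (le_max_left _ _)))
                  (mul_nonneg hθm0 (le_min (abs_nonneg _) (abs_nonneg _)))
            have h7 : (2 * (S.card : ℝ) - 1
                  - ((S.filter (fun i => v n i ≠ 0 ∨ w n i ≠ 0)).card : ℝ))
                  * (α n * θ₁ n + (1 - α n) * θ₂ n)
                ≤ (2 * (S.card : ℝ) - 1
                  - ((S.filter (fun i => v n i ≠ 0 ∨ w n i ≠ 0)).card : ℝ)) * (2 * θ₁ n) :=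
              mul_le_mul_of_nonneg_left hθb2 (by linarith [hqK, hK2])
            have h8 : 0 ≤ (1 - ϱ n) * θ₁ n
                * (((S.filter (fun i => v n i ≠ 0 ∨ w n i ≠ 0)).card : ℝ)
                  - ((sstar n : ℕ) : ℝ)) :=
              mul_nonneg (mul_nonneg (by linarith [hϱ1 n]) (hθ₁nn n)) (by linarith [hsq])
            linarith [h7, h8]
        calc l1norm (g (n+1) * x (n+1) - xstar)
            = ∑ i ∈ S, |g (n+1) i * x (n+1) i - xstar i| := hgxsum
          _ ≤ ∑ i ∈ S, (α n * Dv n i + (1 - α n) * Dw n i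
                + (if v n i ≠ 0 ∨ w n i ≠ 0 then 2 * ϱ n * θ₁ n
                   else α n * θ₁ n + (1 - α n) * θ₂ n)) := Finset.sum_le_sum peri
          _ = α n * ∑ i ∈ S, Dv n i + (1 - α n) * ∑ i ∈ S, Dw n i
                + (((S.filter (fun i => v n i ≠ 0 ∨ w n i ≠ 0)).card : ℝ) * (2 * ϱ n * θ₁ n)
                  + ((S.filter (fun i => ¬(v n i ≠ 0 ∨ w n i ≠ 0))).card : ℝ)
                    * (α n * θ₁ n + (1 - α n) * θ₂ n)) := by
              rw [Finset.sum_add_distrib, Finset.sum_add_distrib, ← Finset.mul_sum,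
                ← Finset.mul_sum, hite]
          _ ≤ α n * (((S.card : ℝ) - 1) * θ₁ n) + (1 - α n) * (((S.card : ℝ) - 1) * θ₂ n)
                + (((S.filter (fun i => v n i ≠ 0 ∨ w n i ≠ 0)).card : ℝ) * (2 * ϱ n * θ₁ n)
                  + ((S.filter (fun i => ¬(v n i ≠ 0 ∨ w n i ≠ 0))).card : ℝ)
                    * (α n * θ₁ n + (1 - α n) * θ₂ n)) := by
              linarith [hb1, hb2]
          _ ≤ _ := final
      exact ⟨step1, step2⟩
  -- positivity of the contraction factors
  have hflt1 : 4 * gmc A * (S.card : ℝ) - 2 * gmc A < 1 := by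
    have h1 : (0:ℝ) < 4 * gmc A := by linarith
    have h2 := mul_lt_mul_of_pos_right hSμ h1
    have h3 : (2 + 1 / gmc A) / 4 * (4 * gmc A) = 2 * gmc A + 1 := by
      have h4 : (2 + 1 / gmc A) / 4 * (4 * gmc A) = 2 * gmc A + 1 / gmc A * gmc A := by
        ring
      rw [h4, one_div_mul_cancel (ne_of_gt hμ)]
    nlinarith
  have hf0 : ∀ k, 0 < 4 * gmc A * (S.card : ℝ) - 2 * gmc A
      - 2 * (1 - ϱ k) * gmc A * ((sstar k : ℕ) : ℝ) ∧
      4 * gmc A * (S.card : ℝ) - 2 * gmc A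
      - 2 * (1 - ϱ k) * gmc A * ((sstar k : ℕ) : ℝ) < 1 := by
    intro k
    have hsK : ((sstar k : ℕ) : ℝ) ≤ (S.card : ℝ) := by
      have hsub : Finset.univ.filter (fun i => v k i ≠ 0) ⊆ S := by
        intro i hi
        rw [Finset.mem_filter] at hi
        by_contra hiS
        exact hi.2 (hvS k i hiS)
      have h : sstar k ≤ S.card := by
        rw [hsstar k]; exact le_trans (min_le_left _ _) (Finset.card_le_card hsub)
      exact_mod_cast h
    have hs0 : (0:ℝ) ≤ ((sstar k : ℕ) : ℝ) := Nat.cast_nonneg _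
    have hup : 0 ≤ 2 * (1 - ϱ k) * gmc A * ((sstar k : ℕ) : ℝ) :=
      mul_nonneg (mul_nonneg (mul_nonneg (by norm_num) (by linarith [hϱ1 k])) hμ.le) hs0
    constructor
    · rcases Nat.eq_zero_or_pos (sstar k) with h|h
      · rw [h]
        push_cast
        nlinarith [hμ, hK2]
      · have hvpos : 0 < (Finset.univ.filter (fun i => v k i ≠ 0)).card := by
          rw [hsstar k] at h
          exact lt_of_lt_of_le h (min_le_left _ _)
        obtain ⟨i, hi⟩ := Finset.card_pos.mp hvpos
        rw [Finset.mem_filter] at hi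
        have hiS : i ∈ S := by
          by_contra hiS
          exact hi.2 (hvS k i hiS)
        have hϱi := hϱsup k i ⟨hiS, Or.inl hi.2⟩
        have hθM0 : 0 ≤ max (θ₁ k) (θ₂ k) := le_trans (hθ₂nn k) (le_max_right _ _)
        have hϱ0 : 0 ≤ ϱ k := by
          refine le_trans (div_nonneg ?_ ?_) hϱi
          · exact sub_nonneg.mpr (mul_le_mul min_le_max min_le_max
              (le_min (abs_nonneg _) (abs_nonneg _)) hθM0)
          · exact add_nonneg (mul_nonneg hθM0 (le_trans (abs_nonneg _) (le_max_left _ _)))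
              (mul_nonneg (le_min (hθ₁nn k) (hθ₂nn k)) (le_min (abs_nonneg _) (abs_nonneg _)))
        nlinarith [mul_le_mul_of_nonneg_left hsK hμ.le,
          mul_nonneg (mul_nonneg hμ.le hϱ0) hs0,
          mul_pos hμ (show (0:ℝ) < (S.card : ℝ) - 1 by linarith)]
    · linarith [hflt1, hup]
  have hcgpos : ∀ k, 0 < cg k := by
    intro k
    rw [hcg k]
    have h := hf0 k
    linarith [Real.log_neg h.1 h.2]
  have hcpos : 0 < c := by
    rw [hc]
    have h1 : 0 < 4 * gmc A * (S.card : ℝ) - 2 * gmc A := by nlinarith [hμ, hK2]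
    linarith [Real.log_neg h1 hflt1]
  -- iterated error bound
  have hE0 : l1norm (g 0 * x 0 - xstar) ≤ (S.card : ℝ) * Bx := by
    have hcomp : ∀ i, (g 0 * x 0 - xstar) i = -xstar i := by
      intro i
      rw [Pi.sub_apply, Pi.mul_apply, hx0, hg0]
      simp
    calc l1norm (g 0 * x 0 - xstar) = ∑ i, |xstar i| := by
          simp only [l1norm]
          exact Finset.sum_congr rfl (fun i _ => by rw [hcomp i, abs_neg])
      _ = ∑ i ∈ S, |xstar i| := (Finset.sum_subset (Finset.subset_univ S)
          (fun i _ hi => by rw [hxs0 i hi, abs_zero])).symm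
      _ ≤ S.card • Bx := Finset.sum_le_card_nsmul S _ Bx (fun i _ => hxb i)
      _ = (S.card : ℝ) * Bx := nsmul_eq_mul _ _
  have hEprod : ∀ m, l1norm (g m * x m - xstar)
      ≤ (∏ k ∈ Finset.range m, (4 * gmc A * (S.card : ℝ) - 2 * gmc A
          - 2 * (1 - ϱ k) * gmc A * ((sstar k : ℕ) : ℝ))) * ((S.card : ℝ) * Bx) := by
    intro m
    induction m with
    | zero => simpa using hE0
    | succ p ih =>
      have hstep := (step p).2
      have hfeq : 2 * gmc A * (2 * (S.card : ℝ) - 1)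
            - 2 * (1 - ϱ p) * gmc A * ((sstar p : ℕ) : ℝ)
          = 4 * gmc A * (S.card : ℝ) - 2 * gmc A
            - 2 * (1 - ϱ p) * gmc A * ((sstar p : ℕ) : ℝ) := by ring
      rw [hfeq] at hstep
      calc l1norm (g (p+1) * x (p+1) - xstar)
          ≤ (4 * gmc A * (S.card : ℝ) - 2 * gmc A
              - 2 * (1 - ϱ p) * gmc A * ((sstar p : ℕ) : ℝ))
            * l1norm (g p * x p - xstar) := hstep
        _ ≤ (4 * gmc A * (S.card : ℝ) - 2 * gmc A
              - 2 * (1 - ϱ p) * gmc A * ((sstar p : ℕ) : ℝ))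
            * ((∏ k ∈ Finset.range p, (4 * gmc A * (S.card : ℝ) - 2 * gmc A
              - 2 * (1 - ϱ k) * gmc A * ((sstar k : ℕ) : ℝ))) * ((S.card : ℝ) * Bx)) :=
            mul_le_mul_of_nonneg_left ih (hf0 p).1.le
        _ = (∏ k ∈ Finset.range (p+1), (4 * gmc A * (S.card : ℝ) - 2 * gmc A
              - 2 * (1 - ϱ k) * gmc A * ((sstar k : ℕ) : ℝ))) * ((S.card : ℝ) * Bx) := by
            rw [Finset.prod_range_succ]
            ring
  refine ⟨?_, hcgpos, hcpos, ?_⟩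
  · intro n i hne
    by_contra hiS
    exact hne (hsuppx n i hiS)
  · intro n hn
    obtain ⟨p, rfl⟩ := Nat.exists_eq_add_of_le hn
    have hidx : 2 + p - 1 = p + 1 := by omega
    have hexp : Real.exp (-(∑ k ∈ Finset.range (2 + p - 1), cg k) - c)
        = (4 * gmc A * (S.card : ℝ) - 2 * gmc A)
          * ∏ k ∈ Finset.range (p + 1), (4 * gmc A * (S.card : ℝ) - 2 * gmc A
            - 2 * (1 - ϱ k) * gmc A * ((sstar k : ℕ) : ℝ)) := by
      rw [hidx]
      have h1 : -(∑ k ∈ Finset.range (p+1), cg k) - c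
          = -c + ∑ k ∈ Finset.range (p+1), -(cg k) := by
        rw [Finset.sum_neg_distrib]
        ring
      rw [h1, Real.exp_add, Real.exp_sum]
      congr 1
      · rw [hc, neg_neg, Real.exp_log (by nlinarith [hμ, hK2])]
      · exact Finset.prod_congr rfl (fun k _ => by
          rw [hcg k, neg_neg, Real.exp_log (hf0 k).1])
    have hidx2 : 2 + p = (p + 1) + 1 := by omega
    have hx2 : l1norm (x (2 + p) - xstar)
        ≤ 2 * gmc A * (2 * (S.card : ℝ) - 1) * l1norm (g (p+1) * x (p+1) - xstar) := by
      have h := (step (p+1)).1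
      rw [← hidx2] at h
      exact h
    calc l2norm (x (2 + p) - xstar) ≤ l1norm (x (2 + p) - xstar) := l2norm_le_l1norm _
      _ ≤ 2 * gmc A * (2 * (S.card : ℝ) - 1) * l1norm (g (p+1) * x (p+1) - xstar) := hx2
      _ ≤ 2 * gmc A * (2 * (S.card : ℝ) - 1)
          * ((∏ k ∈ Finset.range (p+1), (4 * gmc A * (S.card : ℝ) - 2 * gmc A
            - 2 * (1 - ϱ k) * gmc A * ((sstar k : ℕ) : ℝ))) * ((S.card : ℝ) * Bx)) :=
          mul_le_mul_of_nonneg_left (hEprod (p+1)) (by nlinarith [hμ, hK2])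
      _ = (S.card : ℝ) * Bx * ((4 * gmc A * (S.card : ℝ) - 2 * gmc A)
          * ∏ k ∈ Finset.range (p + 1), (4 * gmc A * (S.card : ℝ) - 2 * gmc A
            - 2 * (1 - ϱ k) * gmc A * ((sstar k : ℕ) : ℝ))) := by ring
      _ = (S.card : ℝ) * Bx * Real.exp (-(∑ k ∈ Finset.range (2 + p - 1), cg k) - c) := by
          rw [hexp]
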